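/- Let P, P₀ ∈ ℝ^{n×n} be symmetric positive definite, c, c₀ ∈ ℝⁿ, and let L₀ ∈ ℝ^{n×n} be invertible with P₀ = L₀ L₀ᵀ. Set c̃ := L₀ᵀ (c − c₀), P̃ := L₀⁻¹ P L₀⁻ᵀ, and let ℓ* := sup { ℓ_{c̃,P̃}(β) : β ∈ I_{P̃} }, and γ := −ℓ* (so γ > 0). Then E(c,P) ⊆ E(c₀, γ⁻¹ P₀) and ∂E(c,P) ∩ ∂E(c₀, γ⁻¹ P₀) ≠ ∅; moreover, with d := γ^{−1/2}(c − c₀) + c₀, one has E(d, γ P) ⊆ E(c₀, P₀) and ∂E(d, γ P) ∩ ∂E(c₀, P₀) ≠ ∅. -/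

import Mathlib

open Matrix

noncomputable section

/-- The ellipsoid with center `c` and shape matrix `P`. -/
def Ellipsoid {n : ℕ} (c : Fin n → ℝ) (P : Matrix (Fin n) (Fin n) ℝ) : Set (Fin n → ℝ) :=
  {x | (x - c) ⬝ᵥ P.mulVec (x - c) ≤ 1}

/-- The closed Euclidean unit ball `B(0,1) = {x | xᵀx ≤ 1}`. -/
def UnitBall (n : ℕ) : Set (Fin n → ℝ) :=
  {x | x ⬝ᵥ x ≤ 1}

open Classical in
/-- The dual function `ℓ_{c,P}(β) = −β − Σ_{i : c̄ᵢ ≠ 0} c̄ᵢ² λᵢβ/(λᵢβ−1)`,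
expressed via the eigenvalues `λ` of `P` and the coordinates `c̄ = Vᵀc` of the center
in an orthonormal eigenbasis of `P`. -/
def ellFun {n : ℕ} (lam cbar : Fin n → ℝ) (β : ℝ) : ℝ :=
  -β - ∑ i ∈ Finset.univ.filter (fun i => cbar i ≠ 0),
    (cbar i) ^ 2 * (lam i * β / (lam i * β - 1))

open Classical in
/-- The domain `I_P` of the dual function: `(1/λ_min, ∞)` if some `i` in the support
of `c̄` achieves `λ_min`, and `[1/λ_min, ∞)` otherwise. -/
def ellDom {n : ℕ} (lam cbar : Fin n → ℝ) (lammin : ℝ) : Set ℝ :=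
  if ∃ i, cbar i ≠ 0 ∧ lam i = lammin then Set.Ioi (1 / lammin) else Set.Ici (1 / lammin)

/-!
With `A = L₀ V`, the substitution `y = Aᵀ (x - c₀)` turns `P₀` into the identity and `P` into
`diagonal λ`, so the first claim says that the maximum of `‖y‖²` on the axis-parallel ellipsoid
`∑ λᵢ (yᵢ - c̄ᵢ)² ≤ 1` is `γ` and is attained on its boundary.

Weak Lagrangian duality bounds `‖y‖²` by `-ℓ(β)` for every `β` in the domain, one coordinate at a
time. Conversely, the maximiser `z(β)ᵢ = λᵢ β c̄ᵢ / (λᵢ β - 1)` of the Lagrangian satisfies the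
constraint with equality for some `β`, by the intermediate value theorem, unless the constraint
value is still below `1` at `β = 1 / λ_min`; in that case `z(β)` is pushed to the boundary along an
eigendirection of `λ_min`, which is then orthogonal to `c̄`. Either way `‖z‖² = -ℓ(β)`, so `ℓ(β)` is
the supremum.

The second claim is the first one transported by the homothety of ratio `1 / √γ` about `c₀`.
-/

def InternallyTangent {X : Type*} [TopologicalSpace X] (S T : Set X) : Prop :=
  S ⊆ T ∧ (frontier S ∩ frontier T).Nonempty

section Ellipsoid

variable {n : ℕ}

theorem frontier_ellipsoid (c : Fin n → ℝ) (M : Matrix (Fin n) (Fin n) ℝ) :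
    frontier (Ellipsoid c M) = {x | (x - c) ⬝ᵥ M *ᵥ (x - c) = 1} := by
  have hq : Continuous fun x : Fin n → ℝ => (x - c) ⬝ᵥ M *ᵥ (x - c) := by fun_prop
  refine (frontier_le_subset_eq hq continuous_const).antisymm fun x hx => ?_
  rw [frontier_eq_closure_inter_closure]
  refine ⟨subset_closure hx.le, ?_⟩
  -- along the ray from `c` through `x` the quadratic form grows like `t ^ 2`
  let ray : ℝ → Fin n → ℝ := fun t => c + t • (x - c)
  have hray : ContinuousWithinAt ray (Set.Ioi 1) 1 := by fun_prop
  have hout : ray '' Set.Ioi 1 ⊆ (Ellipsoid c M)ᶜ := by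
    rintro _ ⟨t, ht, rfl⟩
    have ht : (1 : ℝ) < t ^ 2 := one_lt_pow₀ ht two_ne_zero
    simp only [Set.mem_compl_iff, Ellipsoid, Set.mem_ofPred_eq, not_le, ray,
      add_sub_cancel_left, mulVec_smul, smul_dotProduct, dotProduct_smul, smul_eq_mul]
    nlinarith [hx.symm]
  have hx1 : ray 1 = x := by simp [ray]
  exact hx1 ▸ closure_mono hout (hray.mem_closure_image (by simp [closure_Ioi]))

theorem quadForm_transpose_mul_mul {g : (Fin n → ℝ) → Fin n → ℝ} {B : Matrix (Fin n) (Fin n) ℝ}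
    (hg : ∀ x y, g x - g y = B *ᵥ (x - y)) (c x : Fin n → ℝ) (M : Matrix (Fin n) (Fin n) ℝ) :
    (x - c) ⬝ᵥ (Bᵀ * M * B) *ᵥ (x - c) = (g x - g c) ⬝ᵥ M *ᵥ (g x - g c) := by
  rw [hg, ← mulVec_mulVec, ← mulVec_mulVec, dotProduct_mulVec, vecMul_transpose]

theorem ellipsoid_transpose_mul_mul {g : (Fin n → ℝ) → Fin n → ℝ} {B : Matrix (Fin n) (Fin n) ℝ}
    (hg : ∀ x y, g x - g y = B *ᵥ (x - y)) (c : Fin n → ℝ) (M : Matrix (Fin n) (Fin n) ℝ) :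
    Ellipsoid c (Bᵀ * M * B) = g ⁻¹' Ellipsoid (g c) M := by
  ext x
  simp only [Ellipsoid, Set.mem_ofPred_eq, Set.mem_preimage, quadForm_transpose_mul_mul hg]

theorem frontier_ellipsoid_transpose_mul_mul {g : (Fin n → ℝ) → Fin n → ℝ}
    {B : Matrix (Fin n) (Fin n) ℝ} (hg : ∀ x y, g x - g y = B *ᵥ (x - y)) (c : Fin n → ℝ)
    (M : Matrix (Fin n) (Fin n) ℝ) :
    frontier (Ellipsoid c (Bᵀ * M * B)) = g ⁻¹' frontier (Ellipsoid (g c) M) := by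
  ext x
  simp only [frontier_ellipsoid, Set.mem_ofPred_eq, Set.mem_preimage,
    quadForm_transpose_mul_mul hg]

theorem InternallyTangent.ellipsoid_transpose_mul_mul {g : (Fin n → ℝ) → Fin n → ℝ}
    {B : Matrix (Fin n) (Fin n) ℝ} (hB : IsUnit B) (hg : ∀ x y, g x - g y = B *ᵥ (x - y))
    {c c' e e' : Fin n → ℝ} (hc : g c = e) (hc' : g c' = e') {M M' : Matrix (Fin n) (Fin n) ℝ}
    (h : InternallyTangent (Ellipsoid e M) (Ellipsoid e' M')) :
    InternallyTangent (Ellipsoid c (Bᵀ * M * B)) (Ellipsoid c' (Bᵀ * M' * B)) := by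
  subst hc hc'
  obtain ⟨hsub, y, hy⟩ := h
  obtain ⟨x, hx⟩ := mulVec_surjective_iff_isUnit.mpr hB (y - g 0)
  have hgx : g x = y := by simpa [hx] using hg x 0
  refine ⟨?_, x, ?_⟩
  · rw [_root_.ellipsoid_transpose_mul_mul hg, _root_.ellipsoid_transpose_mul_mul hg]
    exact Set.preimage_mono hsub
  · rw [frontier_ellipsoid_transpose_mul_mul hg, frontier_ellipsoid_transpose_mul_mul hg]
    simpa [hgx] using hy

theorem InternallyTangent.ellipsoid_homothety {s : ℝ} (hs : s ≠ 0) {c c₀ : Fin n → ℝ}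
    {M M' : Matrix (Fin n) (Fin n) ℝ} (h : InternallyTangent (Ellipsoid c M) (Ellipsoid c₀ M')) :
    InternallyTangent (Ellipsoid (s⁻¹ • (c - c₀) + c₀) ((s * s) • M))
      (Ellipsoid c₀ ((s * s) • M')) := by
  have h' := h.ellipsoid_transpose_mul_mul (g := fun x => s • (x - c₀) + c₀) (B := s • 1)
    (c := s⁻¹ • (c - c₀) + c₀) (c' := c₀) ((isUnit_iff_isUnit_det _).mpr (by simp [hs]))
    (fun x y => by simp [smul_mulVec, smul_sub]) (by simp [smul_smul, hs]) (by simp)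
  simpa [smul_smul] using h'

theorem quadForm_diagonal (lam z c : Fin n → ℝ) :
    (z - c) ⬝ᵥ diagonal lam *ᵥ (z - c) = ∑ i, lam i * (z i - c i) ^ 2 := by
  simp only [dotProduct, mulVec_diagonal, Pi.sub_apply]
  exact Finset.sum_congr rfl fun i _ => by ring

theorem quadForm_zero_smul_one (r : ℝ) (y : Fin n → ℝ) :
    (y - 0) ⬝ᵥ (r • 1 : Matrix (Fin n) (Fin n) ℝ) *ᵥ (y - 0) = r * (y ⬝ᵥ y) := by
  simp [smul_mulVec]

end Ellipsoid

theorem sq_le_mul_sub_sq_add_mul_div {k : ℝ} (hk : 1 < k) (z c : ℝ) :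
    z ^ 2 ≤ k * (z - c) ^ 2 + c ^ 2 * (k / (k - 1)) := by
  have hk' : 0 < k - 1 := sub_pos.mpr hk
  rw [mul_div_assoc', ← sub_le_iff_le_add', le_div_iff₀ hk']
  nlinarith [sq_nonneg ((k - 1) * z - k * c)]

theorem sum_mul_add_single_sq {ι : Type*} [Fintype ι] [DecidableEq ι] (f v : ι → ℝ) (i₀ : ι)
    {t : ℝ} (h : t * v i₀ = 0) :
    ∑ i, f i * (v i + (Pi.single i₀ t : ι → ℝ) i) ^ 2 = ∑ i, f i * v i ^ 2 + f i₀ * t ^ 2 := by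
  have hterm : ∀ i, f i * (v i + (Pi.single i₀ t : ι → ℝ) i) ^ 2
      = f i * v i ^ 2 + if i = i₀ then f i₀ * t ^ 2 else 0 := by
    intro i
    by_cases hi : i = i₀
    · subst hi
      simp only [Pi.single_eq_same, if_true]
      linear_combination 2 * f i * h
    · simp [hi]
  simp only [hterm, Finset.sum_add_distrib, Finset.sum_ite_eq', Finset.mem_univ, if_true]

section Duality

variable {n : ℕ} {lam cbar : Fin n → ℝ} {lammin β : ℝ}

theorem ellFun_eq_sum (lam cbar : Fin n → ℝ) (β : ℝ) :
    ellFun lam cbar β = -β - ∑ i, cbar i ^ 2 * (lam i * β / (lam i * β - 1)) := by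
  rw [ellFun, Finset.sum_filter_of_ne]
  intro i _ h hc
  simp [hc] at h

theorem one_div_le_of_mem_ellDom (hβ : β ∈ ellDom lam cbar lammin) : 1 / lammin ≤ β := by
  unfold ellDom at hβ
  split_ifs at hβ
  exacts [le_of_lt hβ, hβ]

theorem mem_ellDom_of_le {a : ℝ} (ha : a ∈ ellDom lam cbar lammin) (hab : a ≤ β) :
    β ∈ ellDom lam cbar lammin := by
  unfold ellDom at *
  split_ifs at *
  exacts [lt_of_lt_of_le ha hab, le_trans ha hab]

variable (hmin : ∀ i, lammin ≤ lam i) (hpos : 0 < lammin)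
include hmin hpos

theorem one_le_mul_of_mem_ellDom (hβ : β ∈ ellDom lam cbar lammin) (i : Fin n) :
    1 ≤ lam i * β := by
  have h := one_div_le_of_mem_ellDom hβ
  rw [div_le_iff₀ hpos] at h
  nlinarith [hmin i]

theorem one_lt_mul_of_mem_ellDom (hβ : β ∈ ellDom lam cbar lammin) {i : Fin n}
    (hc : cbar i ≠ 0) : 1 < lam i * β := by
  have h := one_div_le_of_mem_ellDom hβ
  rw [div_le_iff₀ hpos] at h
  rcases (hmin i).lt_or_eq with hlt | heq
  · nlinarith
  · rw [ellDom, if_pos ⟨i, hc, heq.symm⟩, Set.mem_Ioi, div_lt_iff₀ hpos] at hβ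
    rw [← heq]
    linarith

theorem sum_sq_le_neg_ellFun {z : Fin n → ℝ} (hz : ∑ i, lam i * (z i - cbar i) ^ 2 ≤ 1)
    (hβ : β ∈ ellDom lam cbar lammin) : z ⬝ᵥ z ≤ -ellFun lam cbar β := by
  have hβpos : 0 < β := lt_of_lt_of_le (by positivity) (one_div_le_of_mem_ellDom hβ)
  have hterm : ∀ i, z i * z i ≤
      β * (lam i * (z i - cbar i) ^ 2) + cbar i ^ 2 * (lam i * β / (lam i * β - 1)) := by
    intro i
    by_cases hc : cbar i = 0
    · simp only [hc, sub_zero]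
      nlinarith [one_le_mul_of_mem_ellDom hmin hpos hβ i, mul_self_nonneg (z i)]
    · have := sq_le_mul_sub_sq_add_mul_div (one_lt_mul_of_mem_ellDom hmin hpos hβ hc) (z i) (cbar i)
      linarith
  calc z ⬝ᵥ z
      ≤ ∑ i, (β * (lam i * (z i - cbar i) ^ 2) + cbar i ^ 2 * (lam i * β / (lam i * β - 1))) :=
        Finset.sum_le_sum fun i _ => hterm i
    _ = β * ∑ i, lam i * (z i - cbar i) ^ 2 + ∑ i, cbar i ^ 2 * (lam i * β / (lam i * β - 1)) := by
        rw [Finset.sum_add_distrib, Finset.mul_sum]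
    _ ≤ β * 1 + ∑ i, cbar i ^ 2 * (lam i * β / (lam i * β - 1)) := by gcongr
    _ = -ellFun lam cbar β := by rw [ellFun_eq_sum]; ring

end Duality

section DualPoint

open Filter Topology

variable {n : ℕ}

-- `dualPoint lam cbar β` maximises the Lagrangian
-- `z ⬝ᵥ z - β * (∑ i, lam i * (z i - cbar i) ^ 2 - 1)`, and `dualConstraint lam cbar β` is the
-- value of the constraint there.
def dualPoint (lam cbar : Fin n → ℝ) (β : ℝ) : Fin n → ℝ :=
  fun i => lam i * β * cbar i / (lam i * β - 1)

def dualConstraint (lam cbar : Fin n → ℝ) (β : ℝ) : ℝ :=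
  ∑ i, lam i * cbar i ^ 2 / (lam i * β - 1) ^ 2

variable {lam cbar : Fin n → ℝ} {β : ℝ}

theorem sum_mul_dualPoint_sub_sq (hβ : ∀ i, cbar i ≠ 0 → lam i * β ≠ 1) :
    ∑ i, lam i * (dualPoint lam cbar β i - cbar i) ^ 2 = dualConstraint lam cbar β := by
  refine Finset.sum_congr rfl fun i _ => ?_
  by_cases hc : cbar i = 0
  · simp [dualPoint, hc]
  · have : lam i * β - 1 ≠ 0 := sub_ne_zero.mpr (hβ i hc)
    simp only [dualPoint]
    field_simp
    ring

theorem sum_dualPoint_sq (hβ : ∀ i, cbar i ≠ 0 → lam i * β ≠ 1) :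
    ∑ i, dualPoint lam cbar β i ^ 2 = -ellFun lam cbar β - β + β * dualConstraint lam cbar β := by
  have hterm : ∀ i, dualPoint lam cbar β i ^ 2
      = cbar i ^ 2 * (lam i * β / (lam i * β - 1))
        + β * (lam i * cbar i ^ 2 / (lam i * β - 1) ^ 2) := by
    intro i
    by_cases hc : cbar i = 0
    · simp [dualPoint, hc]
    · have : lam i * β - 1 ≠ 0 := sub_ne_zero.mpr (hβ i hc)
      simp only [dualPoint]
      field_simp
      ring
  rw [Finset.sum_congr rfl fun i _ => hterm i, Finset.sum_add_distrib, ellFun_eq_sum,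
    dualConstraint, Finset.mul_sum]
  ring

theorem tendsto_dualConstraint_atTop (hlam : ∀ i, 0 < lam i) :
    Tendsto (dualConstraint lam cbar) atTop (𝓝 0) := by
  have := tendsto_finsetSum Finset.univ fun i _ =>
    (tendsto_const_nhds (x := lam i * cbar i ^ 2)).div_atTop <|
      (tendsto_pow_atTop two_ne_zero).comp <|
        tendsto_atTop_add_const_right _ (-1) (tendsto_id.const_mul_atTop (hlam i))
  unfold dualConstraint
  simpa [Function.comp_def, sub_eq_add_neg] using this

variable {lammin : ℝ} (hmin : ∀ i, lammin ≤ lam i) (hpos : 0 < lammin)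
include hmin hpos

theorem continuousOn_dualConstraint {a : ℝ} (ha : a ∈ ellDom lam cbar lammin) (b : ℝ) :
    ContinuousOn (dualConstraint lam cbar) (Set.Icc a b) := by
  refine continuousOn_finsetSum _ fun i _ => ?_
  by_cases hc : cbar i = 0
  · simp [hc, continuousOn_const]
  · refine ContinuousOn.div (by fun_prop) (by fun_prop) fun β hβ =>
      pow_ne_zero 2 (sub_ne_zero.mpr ?_)
    exact (one_lt_mul_of_mem_ellDom hmin hpos (mem_ellDom_of_le ha hβ.1) hc).ne'

theorem exists_mem_ellDom_dualConstraint_eq_one {a : ℝ} (ha : a ∈ ellDom lam cbar lammin)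
    (h1 : 1 ≤ dualConstraint lam cbar a) :
    ∃ β ∈ ellDom lam cbar lammin, dualConstraint lam cbar β = 1 := by
  have hlam i : 0 < lam i := hpos.trans_le (hmin i)
  obtain ⟨b, hb⟩ := eventually_atTop.mp
    ((tendsto_dualConstraint_atTop (cbar := cbar) hlam).eventually (gt_mem_nhds one_pos))
  obtain ⟨β, hβ, hψ⟩ := intermediate_value_Icc' (le_max_left a b)
    (continuousOn_dualConstraint hmin hpos ha _) ⟨(hb _ (le_max_right a b)).le, h1⟩
  exact ⟨β, mem_ellDom_of_le ha hβ.1, hψ⟩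

end DualPoint

section Touching

variable {n : ℕ} {lam cbar : Fin n → ℝ} {lammin : ℝ}
  (hmin : ∀ i, lammin ≤ lam i) (hpos : 0 < lammin)
include hmin hpos

-- complementary slackness for the constraint `1 / lammin ≤ β`
theorem exists_mem_ellDom_complementary :
    ∃ β ∈ ellDom lam cbar lammin, dualConstraint lam cbar β ≤ 1 ∧
      (1 - dualConstraint lam cbar β) * (β - 1 / lammin) = 0 := by
  have of_eq_one : (∃ β ∈ ellDom lam cbar lammin, dualConstraint lam cbar β = 1) →
      ∃ β ∈ ellDom lam cbar lammin, dualConstraint lam cbar β ≤ 1 ∧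
        (1 - dualConstraint lam cbar β) * (β - 1 / lammin) = 0 := by
    rintro ⟨β, hβ, hψ⟩
    exact ⟨β, hβ, hψ.le, by rw [hψ, sub_self, zero_mul]⟩
  by_cases hS : ∃ i, cbar i ≠ 0 ∧ lam i = lammin
  · obtain ⟨i, hc, hi⟩ := hS
    -- at `a` the `i`-th summand of the constraint alone equals `1`
    set a := (1 + √lammin * |cbar i|) / lammin
    have ha : a ∈ ellDom lam cbar lammin := by
      rw [ellDom, if_pos ⟨i, hc, hi⟩, Set.mem_Ioi, div_lt_div_iff_of_pos_right hpos]
      have := mul_pos (Real.sqrt_pos.mpr hpos) (abs_pos.mpr hc)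
      linarith
    have hterm : lam i * cbar i ^ 2 / (lam i * a - 1) ^ 2 = 1 := by
      have hden : lam i * a - 1 = √lammin * |cbar i| := by
        rw [hi, mul_div_cancel₀ _ hpos.ne']
        ring
      rw [hden, mul_pow, sq_abs, Real.sq_sqrt hpos.le, hi]
      exact div_self (by positivity)
    refine of_eq_one (exists_mem_ellDom_dualConstraint_eq_one hmin hpos ha ?_)
    rw [← hterm]
    exact Finset.single_le_sum (f := fun j => lam j * cbar j ^ 2 / (lam j * a - 1) ^ 2)
      (fun j _ => div_nonneg (mul_nonneg (hpos.trans_le (hmin j)).le (sq_nonneg _))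
        (sq_nonneg _)) (Finset.mem_univ i)
  · have hdom : ellDom lam cbar lammin = Set.Ici (1 / lammin) := by rw [ellDom, if_neg hS]
    have hmem : 1 / lammin ∈ ellDom lam cbar lammin := hdom ▸ Set.self_mem_Ici
    by_cases h1 : 1 ≤ dualConstraint lam cbar (1 / lammin)
    · exact of_eq_one (exists_mem_ellDom_dualConstraint_eq_one hmin hpos hmem h1)
    · exact ⟨1 / lammin, hmem, (not_le.mp h1).le, by rw [sub_self, mul_zero]⟩

theorem exists_mem_ellDom_dotProduct_self_eq (hex : ∃ i, lam i = lammin) :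
    ∃ β ∈ ellDom lam cbar lammin, ∃ z : Fin n → ℝ,
      ∑ i, lam i * (z i - cbar i) ^ 2 = 1 ∧ z ⬝ᵥ z = -ellFun lam cbar β := by
  obtain ⟨β, hβ, hψ, hcompl⟩ := exists_mem_ellDom_complementary hmin hpos
  obtain ⟨i₀, hi₀⟩ := hex
  have hne : ∀ i, cbar i ≠ 0 → lam i * β ≠ 1 :=
    fun i hc => (one_lt_mul_of_mem_ellDom hmin hpos hβ hc).ne'
  -- if the dual point lies strictly inside, push it to the boundary along the `i₀`-th axis
  set t := √((1 - dualConstraint lam cbar β) / lammin)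
  have ht : t ^ 2 = (1 - dualConstraint lam cbar β) / lammin :=
    Real.sq_sqrt (div_nonneg (sub_nonneg.mpr hψ) hpos.le)
  have hcross : t * cbar i₀ = 0 ∧ t * dualPoint lam cbar β i₀ = 0 := by
    rcases mul_eq_zero.mp hcompl with h | h
    · have : t = 0 := by simp [t, h]
      simp [this]
    · have hc : cbar i₀ = 0 := by
        by_contra hc
        have := one_lt_mul_of_mem_ellDom hmin hpos hβ hc
        rw [hi₀, sub_eq_zero.mp h, mul_one_div_cancel hpos.ne'] at this
        exact lt_irrefl _ this
      simp [dualPoint, hc]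
  refine ⟨β, hβ, dualPoint lam cbar β + Pi.single i₀ t, ?_, ?_⟩
  · simp only [Pi.add_apply, add_sub_right_comm]
    rw [sum_mul_add_single_sq _ _ _ (by rw [mul_sub, hcross.1, hcross.2, sub_zero]),
      sum_mul_dualPoint_sub_sq hne, ht, hi₀]
    field_simp
    ring
  · have := sum_mul_add_single_sq 1 (dualPoint lam cbar β) i₀ hcross.2
    simp only [Pi.one_apply, one_mul] at this
    simp only [dotProduct, Pi.add_apply, ← sq]
    rw [this, sum_dualPoint_sq hne, ht]
    linear_combination -hcompl

end Touching

theorem internallyTangent_ellipsoid_diagonal {n : ℕ} {lam cbar : Fin n → ℝ} {lammin γ : ℝ}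
    (hmin : ∀ i, lammin ≤ lam i) (hex : ∃ i, lam i = lammin) (hpos : 0 < lammin)
    (hγ : γ = -sSup (ellFun lam cbar '' ellDom lam cbar lammin)) :
    0 < γ ∧ InternallyTangent (Ellipsoid cbar (diagonal lam)) (Ellipsoid 0 (γ⁻¹ • 1)) := by
  obtain ⟨β, hβ, z, hz, hzβ⟩ := exists_mem_ellDom_dotProduct_self_eq hmin hpos hex
  have hmax : IsGreatest (ellFun lam cbar '' ellDom lam cbar lammin) (ellFun lam cbar β) :=
    ⟨Set.mem_image_of_mem _ hβ, by
      rintro _ ⟨β', hβ', rfl⟩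
      linarith [sum_sq_le_neg_ellFun hmin hpos hz.le hβ']⟩
  rw [hmax.csSup_eq] at hγ
  have hbound : ∀ y, y ∈ Ellipsoid cbar (diagonal lam) → y ⬝ᵥ y ≤ γ := fun y hy =>
    hγ ▸ sum_sq_le_neg_ellFun hmin hpos ((quadForm_diagonal lam y cbar).symm.trans_le hy) hβ
  have hγpos : 0 < γ := by
    by_contra! hγ0
    have hzero : ∀ y, y ∈ Ellipsoid cbar (diagonal lam) → y = 0 := fun y hy =>
      dotProduct_self_eq_zero.mp <| le_antisymm ((hbound y hy).trans hγ0) <|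
        Finset.sum_nonneg fun i _ => mul_self_nonneg (y i)
    have hc := hzero cbar (by show _ ≤ (1 : ℝ); simp)
    have hz0 := hzero z (by show _ ≤ (1 : ℝ); rw [quadForm_diagonal, hz])
    simp [hc, hz0] at hz
  refine ⟨hγpos, fun y hy => ?_, z, ?_, ?_⟩
  · show _ ≤ (1 : ℝ)
    rw [quadForm_zero_smul_one]
    exact inv_mul_le_one_of_le₀ (hbound y hy) hγpos.le
  · rw [frontier_ellipsoid, Set.mem_ofPred_eq, quadForm_diagonal, hz]
  · rw [frontier_ellipsoid, Set.mem_ofPred_eq, quadForm_zero_smul_one, hzβ, ← hγ,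
      inv_mul_cancel₀ hγpos.ne']

theorem Matrix.eq_mul_mul_transpose_of_inv_mul_mul_transpose_eq {m R : Type*} [Fintype m]
    [DecidableEq m] [CommRing R] {L P Q : Matrix m m R} (hL : IsUnit L)
    (h : L⁻¹ * P * L⁻¹ᵀ = Q) : P = L * Q * Lᵀ := by
  have hdet : IsUnit L.det := (isUnit_iff_isUnit_det L).mp hL
  rw [← h, transpose_nonsing_inv, ← Matrix.mul_assoc, ← Matrix.mul_assoc, mul_nonsing_inv _ hdet,
    Matrix.one_mul, nonsing_inv_mul_cancel_right _ _ (by rwa [det_transpose])]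

theorem Matrix.PosDef.pos_of_eq_mul_diagonal_mul_transpose {n : ℕ}
    {P A : Matrix (Fin n) (Fin n) ℝ} {lam : Fin n → ℝ} (hP : P.PosDef) (hA : IsUnit A)
    (h : P = A * diagonal lam * Aᵀ) (i : Fin n) : 0 < lam i := by
  rw [← conjTranspose_eq_transpose_of_trivial, ← star_eq_conjTranspose] at h
  exact posDef_diagonal_iff.mp ((IsUnit.posDef_star_right_conjugate_iff hA).mp (h ▸ hP)) i

theorem stmt_18_general {n : ℕ} (P P₀ : Matrix (Fin n) (Fin n) ℝ) (c c₀ : Fin n → ℝ)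
    (hP : P.PosDef)
    (L₀ : Matrix (Fin n) (Fin n) ℝ) (hL₀ : IsUnit L₀) (hfac : P₀ = L₀ * L₀ᵀ)
    -- spectral decomposition of the transformed matrix `P̃ = L₀⁻¹ P L₀⁻ᵀ`
    (V D : Matrix (Fin n) (Fin n) ℝ) (lam : Fin n → ℝ)
    (hV : Vᵀ * V = 1) (hD : D = Matrix.diagonal lam)
    (hdec : L₀⁻¹ * P * (L₀⁻¹)ᵀ = V * D * Vᵀ)
    (lammin : ℝ) (hmin : ∀ i, lammin ≤ lam i) (hex : ∃ i, lam i = lammin)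
    -- `ℓ* = sup { ℓ_{c̃,P̃}(β) : β ∈ I_{P̃} }` with `c̃ = L₀ᵀ(c − c₀)`, and `γ = −ℓ*`
    (γ : ℝ)
    (hγ : γ = -sSup (ellFun lam (Vᵀ.mulVec (L₀ᵀ.mulVec (c - c₀))) ''
      ellDom lam (Vᵀ.mulVec (L₀ᵀ.mulVec (c - c₀))) lammin)) :
    0 < γ ∧
    (Ellipsoid c P ⊆ Ellipsoid c₀ (γ⁻¹ • P₀) ∧
      (frontier (Ellipsoid c P) ∩ frontier (Ellipsoid c₀ (γ⁻¹ • P₀))).Nonempty) ∧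
    (Ellipsoid ((Real.sqrt γ)⁻¹ • (c - c₀) + c₀) (γ • P) ⊆ Ellipsoid c₀ P₀ ∧
      (frontier (Ellipsoid ((Real.sqrt γ)⁻¹ • (c - c₀) + c₀) (γ • P)) ∩
        frontier (Ellipsoid c₀ P₀)).Nonempty) := by
  set A := L₀ * V
  have hA : IsUnit A := hL₀.mul ⟨⟨V, Vᵀ, mul_eq_one_comm.mp hV, hV⟩, rfl⟩
  have hPA : P = A * diagonal lam * Aᵀ := by
    rw [eq_mul_mul_transpose_of_inv_mul_mul_transpose_eq hL₀ hdec, hD, transpose_mul]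
    simp only [A, Matrix.mul_assoc]
  have hP₀A : P₀ = A * Aᵀ := by
    rw [hfac, transpose_mul, Matrix.mul_assoc, ← Matrix.mul_assoc V, mul_eq_one_comm.mp hV,
      Matrix.one_mul]
  have hpos : 0 < lammin :=
    hex.elim fun i hi => hi ▸ hP.pos_of_eq_mul_diagonal_mul_transpose hA hPA i
  rw [mulVec_mulVec, ← transpose_mul] at hγ
  obtain ⟨hγpos, hdiag⟩ := internallyTangent_ellipsoid_diagonal hmin hex hpos hγ
  have h₁ : InternallyTangent (Ellipsoid c P) (Ellipsoid c₀ (γ⁻¹ • P₀)) := by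
    have h := hdiag.ellipsoid_transpose_mul_mul (g := fun x => Aᵀ *ᵥ (x - c₀))
      ((isUnit_transpose A).mpr hA) (fun x y => by rw [← mulVec_sub, sub_sub_sub_cancel_right])
      rfl (by rw [sub_self, mulVec_zero])
    rwa [transpose_transpose, ← hPA, Matrix.mul_smul, Matrix.mul_one, Matrix.smul_mul, ← hP₀A] at h
  have h₂ := h₁.ellipsoid_homothety (Real.sqrt_ne_zero'.mpr hγpos)
  rw [Real.mul_self_sqrt hγpos.le, smul_smul, mul_inv_cancel₀ hγpos.ne', one_smul] at h₂
  exact ⟨hγpos, h₁, h₂⟩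

theorem stmt_18 {n : ℕ} (P P₀ : Matrix (Fin n) (Fin n) ℝ) (c c₀ : Fin n → ℝ)
    (hP : P.PosDef) (hP₀ : P₀.PosDef)
    (L₀ : Matrix (Fin n) (Fin n) ℝ) (hL₀ : IsUnit L₀) (hfac : P₀ = L₀ * L₀ᵀ)
    -- spectral decomposition of the transformed matrix `P̃ = L₀⁻¹ P L₀⁻ᵀ`
    (V D : Matrix (Fin n) (Fin n) ℝ) (lam : Fin n → ℝ)
    (hV : Vᵀ * V = 1) (hD : D = Matrix.diagonal lam)
    (hdec : L₀⁻¹ * P * (L₀⁻¹)ᵀ = V * D * Vᵀ)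
    (lammin : ℝ) (hmin : ∀ i, lammin ≤ lam i) (hex : ∃ i, lam i = lammin)
    -- `ℓ* = sup { ℓ_{c̃,P̃}(β) : β ∈ I_{P̃} }` with `c̃ = L₀ᵀ(c − c₀)`, and `γ = −ℓ*`
    (γ : ℝ)
    (hγ : γ = -sSup (ellFun lam (Vᵀ.mulVec (L₀ᵀ.mulVec (c - c₀))) ''
      ellDom lam (Vᵀ.mulVec (L₀ᵀ.mulVec (c - c₀))) lammin)) :
    0 < γ ∧
    (Ellipsoid c P ⊆ Ellipsoid c₀ (γ⁻¹ • P₀) ∧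
      (frontier (Ellipsoid c P) ∩ frontier (Ellipsoid c₀ (γ⁻¹ • P₀))).Nonempty) ∧
    (Ellipsoid ((Real.sqrt γ)⁻¹ • (c - c₀) + c₀) (γ • P) ⊆ Ellipsoid c₀ P₀ ∧
      (frontier (Ellipsoid ((Real.sqrt γ)⁻¹ • (c - c₀) + c₀) (γ • P)) ∩
        frontier (Ellipsoid c₀ P₀)).Nonempty) :=
  stmt_18_general P P₀ c c₀ hP L₀ hL₀ hfac V D lam hV hD hdec lammin hmin hex γ hγ
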